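/- The no-common-neighbor hypothesis in the Holepunch Theorem cannot be dropped: let a, b, c, d, f, r, s be seven pairwise distinct colors, and let G be the plane graph with vertex set {p0, q0, z, q1, p1, u1}, outer cycle C = p0 q0 z q1 p1 u1 (edges p0q0, q0z, zq1, q1p1, p1u1, u1p0), and additional edges u1z, u1q0, u1q1. Let L be the list-assignment with L(p0) = {a}, L(u1) = {a, b, c}, L(p1) = {b, c, f}, L(q0) = {a, b, c, r, s}, L(q1) = {b, c, d, f, s}, L(z) = {b, c, d, r, s}, and let P = p0 q0 z q1 p1. Then there is no partial L-coloring φ of V(C)∖{q0, q1} with p0, p1, z ∈ dom(φ) such that |L_φ(q0)| ≥ 3, |L_φ(q1)| ≥ 3, and every extension of φ to an L-coloring of dom(φ) ∪ {q0, q1} extends to an L-coloring of G. -/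

import Mathlib

open scoped Classical

/-! ### Basic list-colouring notions (colours are natural numbers) -/

/-- `φ` is an `L`-coloring of the vertex set `S` in the graph `G`: it takes values in the
lists and is a proper coloring of the subgraph induced by `S`. -/
def IsColoringOn {V : Type} (G : SimpleGraph V) (L : V → Finset ℕ)
    (S : Finset V) (φ : V → ℕ) : Prop :=
  (∀ v ∈ S, φ v ∈ L v) ∧ ∀ ⦃u v : V⦄, u ∈ S → v ∈ S → G.Adj u v → φ u ≠ φ v

/-- The reduced list-assignment `L_φ` obtained from a partial coloring `φ` with domain `D`:
from `L v` delete the colors used by `φ` on neighbours of `v` lying in `D`. -/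
noncomputable def reducedList {V : Type} [DecidableEq V] (G : SimpleGraph V)
    (L : V → Finset ℕ) (D : Finset V) (φ : V → ℕ) (v : V) : Finset ℕ :=
  L v \ (D.filter (fun w => G.Adj v w)).image φ

/-- The (cyclically) consecutive pairs of a list regarded as a cycle. -/
def cycleEdges {V : Type} (f : List V) : List (V × V) := f.zip (f.rotate 1)

/-- `f` is (the list of vertices, in cyclic order, of) a cycle of `G`. -/
def IsCycleList {V : Type} (G : SimpleGraph V) (f : List V) : Prop :=
  f.Nodup ∧ 3 ≤ f.length ∧ ∀ p ∈ cycleEdges f, G.Adj p.1 p.2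

/-- `uv` is an edge of the cycle (given as a list) `f`. -/
def EdgeOnCycle {V : Type} (f : List V) (u v : V) : Prop :=
  (u, v) ∈ cycleEdges f ∨ (v, u) ∈ cycleEdges f

/-- The consecutive pairs of a list regarded as a path. -/
def consecPairs {V : Type} (l : List V) : List (V × V) := l.zip l.tail

/-- `a` and `b` are consecutive on the path (given as a list) `l`. -/
def AdjInList {V : Type} (l : List V) (a b : V) : Prop :=
  (a, b) ∈ consecPairs l ∨ (b, a) ∈ consecPairs l

/-- `G` contains no induced four-cycle. -/
def NoInduced4Cycle {V : Type} (G : SimpleGraph V) : Prop :=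
  ¬ ∃ a b x y : V, ([a, b, x, y] : List V).Nodup ∧ G.Adj a b ∧ G.Adj b x ∧
      G.Adj x y ∧ G.Adj y a ∧ ¬ G.Adj a x ∧ ¬ G.Adj b y

/-- The subgraph of `G` on the vertex set `S` is a broken wheel with principal path `x q y`:
`S ∖ {q}` carries an induced path from `x` to `y`, every vertex of which is adjacent to the
hub `q`. -/
def IsBrokenWheel {V : Type} [DecidableEq V] (G : SimpleGraph V) (S : Finset V)
    (x q y : V) : Prop :=
  ∃ l : List V, 2 ≤ l.length ∧ l.Nodup ∧ q ∉ l ∧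
    l.head? = some x ∧ l.getLast? = some y ∧
    S = insert q l.toFinset ∧
    (∀ a ∈ l, G.Adj q a) ∧
    (∀ a ∈ l, ∀ b ∈ l, (G.Adj a b ↔ AdjInList l a b))

/-- `Λ^{r1 r2 r3}_{S}(•, b, a)`: the set of colors `d ∈ L r1` such that some `L`-coloring of
the vertex set `S` uses `d, b, a` on the respective vertices `r1, r2, r3`. -/
noncomputable def LambdaSet {V : Type} (G : SimpleGraph V) (L : V → Finset ℕ)
    (S : Finset V) (r1 r2 r3 : V) (b a : ℕ) : Finset ℕ :=
  (L r1).filter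
    (fun d => ∃ φ : V → ℕ, IsColoringOn G L S φ ∧ φ r1 = d ∧ φ r2 = b ∧ φ r3 = a)

/-- `a ∈ L r3` is a universal color for (the subgraph on) `S` with respect to the
2-path `r1 r2 r3`. -/
def IsUniversalColor {V : Type} [DecidableEq V] (G : SimpleGraph V) (L : V → Finset ℕ)
    (S : Finset V) (r1 r2 r3 : V) (a : ℕ) : Prop :=
  ∀ b ∈ L r2, b ≠ a → LambdaSet G L S r1 r2 r3 b a = (L r1).erase b

/-- `a ∈ L r3` is an almost universal color for `S` with respect to the 2-path `r1 r2 r3`. -/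
def IsAlmostUniversalColor {V : Type} (G : SimpleGraph V) (L : V → Finset ℕ)
    (S : Finset V) (r1 r2 r3 : V) (a : ℕ) : Prop :=
  ∀ b ∈ L r2, b ≠ a → (L r1).card - 1 ≤ (LambdaSet G L S r1 r2 r3 b a).card

/-- `v` is joined to `w` by a walk of `G` all of whose vertices avoid the set `F`. -/
def AvoidReach {V : Type} (G : SimpleGraph V) (F : Finset V) (v w : V) : Prop :=
  ∃ p : G.Walk v w, ∀ x ∈ p.support, x ∉ F

/-- The data of a holepunch configuration: a graph `G`; the outer cycle
`p0 q0 z q1 p1 ut ⋯ u1` (listed so that `C ∖ P̊` is the path `p0 u1 ⋯ ut p1`, where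
`us = [u1, …, ut]`); a face system `faces` witnessing a plane embedding; and a
list-assignment `L`. -/
structure Config (V : Type) where
  G : SimpleGraph V
  p0 : V
  q0 : V
  z : V
  q1 : V
  p1 : V
  us : List V
  faces : Finset (List V)
  L : V → Finset ℕ

namespace Config

variable {V : Type} [Fintype V] [DecidableEq V] (c : Config V)

/-- The outer cycle `C`, as a list of vertices in cyclic order. -/
def cyc : List V := [c.p0, c.q0, c.z, c.q1, c.p1] ++ c.us.reverse

/-- The vertex set of the path `P = p0 q0 z q1 p1`. -/
def Pset : Finset V := {c.p0, c.q0, c.z, c.q1, c.p1}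

/-- The vertex set of the outer cycle `C`. -/
def Cset : Finset V := c.Pset ∪ c.us.toFinset

/-- The path `C ∖ P̊ = p0 u1 ⋯ ut p1`. -/
def path0 : List V := c.p0 :: (c.us ++ [c.p1])

/-- The path `C ∖ P̊` traversed starting from `p1`. -/
def path1 : List V := c.path0.reverse

/-- A combinatorial plane embedding of `G` with outer face bounded by `C`: a system of
facial cycles containing `C`, covering every edge exactly twice, and satisfying Euler's
formula. -/
def IsPlane : Prop :=
  c.cyc ∈ c.faces ∧
  (∀ f ∈ c.faces, IsCycleList c.G f) ∧
  (∀ ⦃u v : V⦄, c.G.Adj u v → (c.faces.filter (fun f => EdgeOnCycle f u v)).card = 2) ∧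
  Fintype.card V + c.faces.card = c.G.edgeSet.ncard + 2

/-- Every face of `G` other than the outer face is bounded by a triangle. -/
def InnerTriangulated : Prop :=
  ∀ f ∈ c.faces, f ≠ c.cyc → f.length = 3

/-- The three internal vertices `q0, z, q1` of `P` have no common neighbour in `C ∖ P`. -/
def NoCommonNbr : Prop :=
  ∀ w ∈ c.us, ¬ (c.G.Adj c.q0 w ∧ c.G.Adj c.z w ∧ c.G.Adj c.q1 w)

/-- The list sizes of the general (Holepunch) hypotheses. -/
def BaseLists : Prop :=
  4 ≤ (c.L c.p0).card + (c.L c.p1).card ∧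
  (c.L c.p0).Nonempty ∧ (c.L c.p1).Nonempty ∧
  (∀ v ∈ c.us, 3 ≤ (c.L v).card) ∧
  5 ≤ (c.L c.q0).card ∧ 5 ≤ (c.L c.z).card ∧ 5 ≤ (c.L c.q1).card ∧
  (∀ v : V, v ∉ c.Cset → 5 ≤ (c.L v).card)

/-- The sharpened list sizes of the minimal-counterexample setup. -/
def ExactLists : Prop :=
  (c.L c.p0).card + (c.L c.p1).card = 4 ∧
  (c.L c.p0).Nonempty ∧ (c.L c.p1).Nonempty ∧
  (∀ v ∈ c.us, (c.L v).card = 3) ∧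
  5 ≤ (c.L c.q0).card ∧ (c.L c.z).card = 5 ∧ 5 ≤ (c.L c.q1).card ∧
  (∀ v : V, v ∉ c.Cset → (c.L v).card = 5)

/-- There is a partial `L`-coloring `φ` of `V(C) ∖ {q0, q1}` whose domain contains
`p0, p1, z`, which leaves lists of size at least three on each of `q0, q1`, and such that
every extension of `φ` to an `L`-coloring of `dom(φ) ∪ {q0, q1}` extends to an
`L`-coloring of all of `G`. -/
def HasGood : Prop :=
  ∃ (D : Finset V) (φ : V → ℕ),
    D ⊆ c.Cset \ {c.q0, c.q1} ∧ c.p0 ∈ D ∧ c.p1 ∈ D ∧ c.z ∈ D ∧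
    IsColoringOn c.G c.L D φ ∧
    3 ≤ (reducedList c.G c.L D φ c.q0).card ∧
    3 ≤ (reducedList c.G c.L D φ c.q1).card ∧
    ∀ ψ : V → ℕ, (∀ v ∈ D, ψ v = φ v) →
      IsColoringOn c.G c.L (D ∪ {c.q0, c.q1}) ψ →
      ∃ σ : V → ℕ, (∀ v ∈ D ∪ {c.q0, c.q1}, σ v = ψ v) ∧
        IsColoringOn c.G c.L Finset.univ σ

/-- Minimality: every plane configuration on strictly fewer vertices satisfying the
general (Holepunch) hypotheses admits a good partial coloring. -/
def Minimal (_cnf : Config V) : Prop :=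
  ∀ (n : ℕ) (c' : Config (Fin n)), n < Fintype.card V →
    c'.IsPlane → IsCycleList c'.G c'.cyc → c'.NoCommonNbr → c'.BaseLists →
    c'.HasGood

/-- `v` can reach the outer cycle off `F` by a walk of `G` avoiding `F`. -/
def OutsideConnected (F : Finset V) (v : V) : Prop :=
  ∃ w ∈ c.Cset, w ∉ F ∧ AvoidReach c.G F v w

/-- The vertex set of the closed exterior of a cycle with vertex set `F`. -/
noncomputable def extVerts (F : Finset V) : Finset V :=
  F ∪ Finset.univ.filter (fun v => v ∉ F ∧ c.OutsideConnected F v)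

/-- The vertex set of the closed interior of a cycle with vertex set `F`. -/
noncomputable def intVerts (F : Finset V) : Finset V :=
  F ∪ Finset.univ.filter (fun v => v ∉ F ∧ ¬ c.OutsideConnected F v)

/-- `G` is short-separation-free: for every cycle `F` of `G` with at most four vertices,
either the closed interior or the closed exterior of `F` contains no vertices other than
those of `F`. -/
def ShortSepFree : Prop :=
  ∀ f : List V, IsCycleList c.G f → f.length ≤ 4 →
    c.intVerts f.toFinset = f.toFinset ∨ c.extVerts f.toFinset = f.toFinset

/-- `uv` is a chord of the outer cycle `C`. -/
def IsChordOfC (u v : V) : Prop :=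
  c.G.Adj u v ∧ u ∈ c.Cset ∧ v ∈ c.Cset ∧ ¬ EdgeOnCycle c.cyc u v

/-- Some chord of `C` is incident to `z`. -/
def ZChord : Prop := ∃ w : V, c.IsChordOfC c.z w

/-- `v0`: the neighbour of `q0` on the path `C ∖ P̊` which is farthest from `p0`. -/
noncomputable def v0 : V :=
  ((c.path0.filter (fun w => decide (c.G.Adj c.q0 w))).getLast?).getD c.p0

/-- `v1`: the neighbour of `q1` on the path `C ∖ P̊` which is farthest from `p1`. -/
noncomputable def v1 : V :=
  ((c.path1.filter (fun w => decide (c.G.Adj c.q1 w))).getLast?).getD c.p1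

/-- `x0`: the neighbour of `z` on the path `C ∖ P̊` which is farthest from `p0`. -/
noncomputable def x0 : V :=
  ((c.path0.filter (fun w => decide (c.G.Adj c.z w))).getLast?).getD c.p0

/-- `x1`: the neighbour of `z` on the path `C ∖ P̊` which is farthest from `p1`. -/
noncomputable def x1 : V :=
  ((c.path1.filter (fun w => decide (c.G.Adj c.z w))).getLast?).getD c.p1

/-- The subpath of `C ∖ P̊` from `p0` to `v0`. -/
noncomputable def seg0 : List V := c.path0.take (c.path0.idxOf c.v0 + 1)

/-- The boundary cycle `p0 u1 ⋯ v0 q0` of `K0`. -/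
noncomputable def K0bd : List V := c.seg0 ++ [c.q0]

/-- The vertex set of `K0`, the subgraph of `G` bounded by the outer walk `v0 ⋯ p0 q0`. -/
noncomputable def K0set : Finset V := c.intVerts c.K0bd.toFinset

/-- The subpath of `C ∖ P̊` from `p1` to `v1`. -/
noncomputable def seg1 : List V := c.path1.take (c.path1.idxOf c.v1 + 1)

/-- The boundary cycle `p1 ut ⋯ v1 q1` of `K1`. -/
noncomputable def K1bd : List V := c.seg1 ++ [c.q1]

/-- The vertex set of `K1`, the subgraph of `G` bounded by the outer walk `v1 ⋯ p1 q1`. -/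
noncomputable def K1set : Finset V := c.intVerts c.K1bd.toFinset

/-- The neighbour of `p0` on the path `C ∖ P̊`. -/
def nbr0 : V := c.path0.getD 1 c.p0

/-- The neighbour of `p1` on the path `C ∖ P̊`. -/
def nbr1 : V := c.path1.getD 1 c.p1

/-- The vertex at distance two from `p0` on the path `C ∖ P̊`. -/
def xdist0 : V := c.path0.getD 2 c.p0

/-- The vertex at distance two from `p1` on the path `C ∖ P̊`. -/
def xdist1 : V := c.path1.getD 2 c.p1

/-- `p0` is predictable: `L(p0) ⊆ L(y)` for the neighbour `y` of `p0` on `C ∖ P̊`. -/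
def Predictable0 : Prop := c.L c.p0 ⊆ c.L c.nbr0

/-- `p1` is predictable: `L(p1) ⊆ L(y)` for the neighbour `y` of `p1` on `C ∖ P̊`. -/
def Predictable1 : Prop := c.L c.p1 ⊆ c.L c.nbr1

end Config

/-- The minimal-counterexample setup: a plane configuration with exact list sizes, all
inner faces triangles, no good partial coloring, and minimum number of vertices among all
plane configurations satisfying the general hypotheses. -/
structure Config.MCE {V : Type} [Fintype V] [DecidableEq V] (c : Config V) : Prop where
  plane : c.IsPlane
  cyc_cycle : IsCycleList c.G c.cyc
  noCommon : c.NoCommonNbr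
  lists : c.ExactLists
  tri : c.InnerTriangulated
  bad : ¬ c.HasGood
  minimal : c.Minimal

/-- The explicit six-vertex configuration of Figure 1: the outer cycle is
`p0 q0 z q1 p1 u1` (vertices `0 1 2 3 4 5` of `Fin 6`) with the additional edges
`u1 q0`, `u1 z`, `u1 q1`, and the indicated lists built from seven distinct colors. -/
def counterexampleConfig (ca cb cc cd cf cr cs : ℕ) : Config (Fin 6) where
  G := SimpleGraph.fromRel (fun u v =>
    (u, v) ∈ ([(0, 1), (1, 2), (2, 3), (3, 4), (4, 5), (5, 0), (5, 1), (5, 2), (5, 3)] :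
      List (Fin 6 × Fin 6)))
  p0 := 0
  q0 := 1
  z := 2
  q1 := 3
  p1 := 4
  us := [5]
  faces := ∅
  L := fun v =>
    if v = 0 then {ca}
    else if v = 1 then {ca, cb, cc, cr, cs}
    else if v = 2 then {cb, cc, cd, cr, cs}
    else if v = 3 then {cb, cc, cd, cf, cs}
    else if v = 4 then {cb, cc, cf}
    else {ca, cb, cc}

/-!
Every admissible domain lies in `{p0, z, p1, u1}`. If `u1` is coloured, then `q0` sees the three
distinct colours `φ p0 = a`, `φ z`, `φ u1` of its list, or, when `φ z = d ∉ L(q0)`, `q1` sees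
the three distinct colours `d`, `φ p1`, `φ u1` of its list; either way a list of size `5` drops
to `2`. If `u1` is not coloured, one can colour `q0` and `q1` so that `b` and `c` both appear on
`q0, z, q1, p1`; together with `a` on `p0` this exhausts `L(u1) = {a, b, c}`.
-/

section ListColoring

variable {V : Type} {G : SimpleGraph V} {L : V → Finset ℕ} {D S : Finset V} {φ : V → ℕ}
  {v w : V}

theorem apply_mem_image_filter_adj (hw : w ∈ D) (hvw : G.Adj v w) :
    φ w ∈ (D.filter (G.Adj v)).image φ :=
  Finset.mem_image_of_mem φ (Finset.mem_filter.2 ⟨hw, hvw⟩)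

theorem card_reducedList_add_card_le [DecidableEq V] {T : Finset ℕ} (hTL : T ⊆ L v)
    (hTD : T ⊆ (D.filter (G.Adj v)).image φ) :
    (reducedList G L D φ v).card + T.card ≤ (L v).card :=
  calc (reducedList G L D φ v).card + T.card ≤ (L v \ T).card + T.card := by
        gcongr; exact Finset.sdiff_subset_sdiff le_rfl hTD
    _ = (L v).card := Finset.card_sdiff_add_card_eq_card hTL

theorem IsColoringOn.not_subset_image_filter_adj (hφ : IsColoringOn G L S φ) (hv : v ∈ S) :
    ¬ L v ⊆ (S.filter (G.Adj v)).image φ := by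
  intro hsub
  obtain ⟨w, hw, hwv⟩ := Finset.mem_image.1 (hsub (hφ.1 v hv))
  rw [Finset.mem_filter] at hw
  exact hφ.2 hw.1 hv hw.2.symm hwv

end ListColoring

/-- The graph of `counterexampleConfig`, stated without the colour parameters so that
adjacency of concrete vertices can be settled by `decide`. -/
def counterexampleGraph : SimpleGraph (Fin 6) :=
  SimpleGraph.fromRel (fun u v =>
    (u, v) ∈ ([(0, 1), (1, 2), (2, 3), (3, 4), (4, 5), (5, 0), (5, 1), (5, 2), (5, 3)] :
      List (Fin 6 × Fin 6)))

instance : DecidableRel counterexampleGraph.Adj :=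
  fun u v => decidable_of_iff _ (SimpleGraph.fromRel_adj _ u v).symm

section Counterexample

variable {ca cb cc cd cf cr cs : ℕ}

local notation "𝒞" => counterexampleConfig ca cb cc cd cf cr cs

theorem counterexampleConfig_adj {u v : Fin 6} :
    (𝒞).G.Adj u v ↔ counterexampleGraph.Adj u v :=
  Iff.rfl

theorem counterexampleConfig_card_reducedList_lt_three
    (hdist : ([ca, cb, cc, cd, cf, cr, cs] : List ℕ).Nodup) {D : Finset (Fin 6)}
    {φ : Fin 6 → ℕ} (hφ : IsColoringOn (𝒞).G (𝒞).L D φ)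
    (h0 : 0 ∈ D) (h2 : 2 ∈ D) (h4 : 4 ∈ D) (h5 : 5 ∈ D) :
    (reducedList (𝒞).G (𝒞).L D φ (𝒞).q0).card < 3 ∨
      (reducedList (𝒞).G (𝒞).L D φ (𝒞).q1).card < 3 := by
  show (reducedList (𝒞).G (𝒞).L D φ 1).card < 3 ∨ (reducedList (𝒞).G (𝒞).L D φ 3).card < 3
  simp only [List.nodup_cons, List.mem_cons, List.not_mem_nil, or_false, List.nodup_nil,
    and_true, not_or] at hdist
  have hφ0 : φ 0 ∈ ({ca} : Finset ℕ) := hφ.1 0 h0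
  have hφ2 : φ 2 ∈ ({cb, cc, cd, cr, cs} : Finset ℕ) := hφ.1 2 h2
  have hφ4 : φ 4 ∈ ({cb, cc, cf} : Finset ℕ) := hφ.1 4 h4
  have hφ5 : φ 5 ∈ ({ca, cb, cc} : Finset ℕ) := hφ.1 5 h5
  have h05 : φ 0 ≠ φ 5 := hφ.2 h0 h5 (counterexampleConfig_adj.2 (by decide))
  have h25 : φ 2 ≠ φ 5 := hφ.2 h2 h5 (counterexampleConfig_adj.2 (by decide))
  have h45 : φ 4 ≠ φ 5 := hφ.2 h4 h5 (counterexampleConfig_adj.2 (by decide))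
  simp only [Finset.mem_insert, Finset.mem_singleton] at hφ0 hφ2 hφ4 hφ5
  by_cases hzd : φ 2 = cd
  · right
    have hTL : ({φ 2, φ 4, φ 5} : Finset ℕ) ⊆ (𝒞).L 3 := by
      show _ ⊆ ({cb, cc, cd, cf, cs} : Finset ℕ)
      simp only [Finset.insert_subset_iff, Finset.singleton_subset_iff, Finset.mem_insert,
        Finset.mem_singleton]
      grind
    have hTD : ({φ 2, φ 4, φ 5} : Finset ℕ) ⊆ (D.filter ((𝒞).G.Adj 3)).image φ := by
      simp only [Finset.insert_subset_iff, Finset.singleton_subset_iff]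
      exact ⟨apply_mem_image_filter_adj h2 (counterexampleConfig_adj.2 (by decide)),
        apply_mem_image_filter_adj h4 (counterexampleConfig_adj.2 (by decide)),
        apply_mem_image_filter_adj h5 (counterexampleConfig_adj.2 (by decide))⟩
    have hT : ({φ 2, φ 4, φ 5} : Finset ℕ).card = 3 :=
      Finset.card_eq_three.2 ⟨_, _, _, by grind, by grind, by grind, rfl⟩
    have := card_reducedList_add_card_le hTL hTD
    have : ((𝒞).L 3).card ≤ 5 := Finset.card_le_five
    omega
  · left
    have hTL : ({φ 0, φ 2, φ 5} : Finset ℕ) ⊆ (𝒞).L 1 := by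
      show _ ⊆ ({ca, cb, cc, cr, cs} : Finset ℕ)
      simp only [Finset.insert_subset_iff, Finset.singleton_subset_iff, Finset.mem_insert,
        Finset.mem_singleton]
      grind
    have hTD : ({φ 0, φ 2, φ 5} : Finset ℕ) ⊆ (D.filter ((𝒞).G.Adj 1)).image φ := by
      simp only [Finset.insert_subset_iff, Finset.singleton_subset_iff]
      exact ⟨apply_mem_image_filter_adj h0 (counterexampleConfig_adj.2 (by decide)),
        apply_mem_image_filter_adj h2 (counterexampleConfig_adj.2 (by decide)),
        apply_mem_image_filter_adj h5 (counterexampleConfig_adj.2 (by decide))⟩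
    have hT : ({φ 0, φ 2, φ 5} : Finset ℕ).card = 3 :=
      Finset.card_eq_three.2 ⟨_, _, _, by grind, by grind, by grind, rfl⟩
    have := card_reducedList_add_card_le hTL hTD
    have : ((𝒞).L 1).card ≤ 5 := Finset.card_le_five
    omega

theorem counterexample_exists_blocking_colors
    (hdist : ([ca, cb, cc, cd, cf, cr, cs] : List ℕ).Nodup) {x2 x4 : ℕ}
    (h2 : x2 ∈ ({cb, cc, cd, cr, cs} : Finset ℕ)) (h4 : x4 ∈ ({cb, cc, cf} : Finset ℕ)) :
    ∃ y1 ∈ ({ca, cb, cc, cr, cs} : Finset ℕ), ∃ y3 ∈ ({cb, cc, cd, cf, cs} : Finset ℕ),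
      y1 ≠ ca ∧ y1 ≠ x2 ∧ y3 ≠ x2 ∧ y3 ≠ x4 ∧ {cb, cc} ⊆ ({y1, x2, y3, x4} : Finset ℕ) := by
  simp only [List.nodup_cons, List.mem_cons, List.not_mem_nil, or_false, List.nodup_nil,
    and_true, not_or] at hdist
  simp only [Finset.mem_insert, Finset.mem_singleton] at h2 h4
  by_cases hb : x2 = cb
  · refine ⟨cc, by simp, cd, by simp, ?_⟩
    simp [Finset.insert_subset_iff]; grind
  by_cases hc : x2 = cc
  · refine ⟨cb, by simp, cd, by simp, ?_⟩
    simp [Finset.insert_subset_iff]; grind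
  rcases h4 with rfl | rfl | rfl
  · refine ⟨cc, by simp, cf, by simp, ?_⟩
    simp [Finset.insert_subset_iff]; grind
  · refine ⟨cb, by simp, cf, by simp, ?_⟩
    simp [Finset.insert_subset_iff]; grind
  · refine ⟨cb, by simp, cc, by simp, ?_⟩
    simp [Finset.insert_subset_iff]; grind

theorem counterexampleConfig_domain_eq {D : Finset (Fin 6)}
    (hD : D ⊆ (𝒞).Cset \ {(𝒞).q0, (𝒞).q1})
    (h0 : 0 ∈ D) (h2 : 2 ∈ D) (h4 : 4 ∈ D) (h5 : 5 ∉ D) : D = {0, 2, 4} := by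
  refine Finset.Subset.antisymm (fun x hx => ?_) (by simp [Finset.insert_subset_iff, h0, h2, h4])
  have hx' : x ∈ ({0, 2, 4, 5} : Finset (Fin 6)) := hD hx
  fin_cases x <;> simp_all

theorem counterexampleConfig_exists_unextendable
    (hdist : ([ca, cb, cc, cd, cf, cr, cs] : List ℕ).Nodup) {φ : Fin 6 → ℕ}
    (hφ : IsColoringOn (𝒞).G (𝒞).L {0, 2, 4} φ) :
    ∃ ψ : Fin 6 → ℕ, (∀ v ∈ ({0, 2, 4} : Finset (Fin 6)), ψ v = φ v) ∧
      IsColoringOn (𝒞).G (𝒞).L ({0, 2, 4} ∪ {(𝒞).q0, (𝒞).q1}) ψ ∧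
      ∀ σ : Fin 6 → ℕ, (∀ v ∈ ({0, 2, 4} : Finset (Fin 6)) ∪ {(𝒞).q0, (𝒞).q1}, σ v = ψ v) →
        ¬ IsColoringOn (𝒞).G (𝒞).L Finset.univ σ := by
  have hS : ({0, 2, 4} ∪ {(𝒞).q0, (𝒞).q1} : Finset (Fin 6)) = {0, 1, 2, 3, 4} :=
    show ({0, 2, 4} ∪ {1, 3} : Finset (Fin 6)) = _ by decide
  have hφ0 : φ 0 = ca := Finset.mem_singleton.1 (hφ.1 0 (by decide))
  obtain ⟨y1, hy1, y3, hy3, h1a, h12, h32, h34, hcover⟩ :=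
    counterexample_exists_blocking_colors hdist (hφ.1 2 (by decide)) (hφ.1 4 (by decide))
  set ψ := Function.update (Function.update φ 1 y1) 3 y3
  refine ⟨ψ, fun v hv => by fin_cases hv <;> rfl, ⟨fun v hv => ?_, fun u v hu hv huv => ?_⟩, ?_⟩
  · rw [hS] at hv
    fin_cases hv
    exacts [hφ.1 0 (by decide), hy1, hφ.1 2 (by decide), hy3, hφ.1 4 (by decide)]
  · rw [counterexampleConfig_adj] at huv
    rw [hS] at hu hv
    fin_cases hu <;> fin_cases hv <;> first | exact absurd huv (by decide) | (simp [ψ]; grind)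
  · intro σ hσψ hσ
    have hσ_eq : ∀ v ∈ ({0, 1, 2, 3, 4} : Finset (Fin 6)), σ v = ψ v := hS ▸ hσψ
    have hnbrs : ({σ 0, σ 1, σ 2, σ 3, σ 4} : Finset ℕ) ⊆
        (Finset.univ.filter ((𝒞).G.Adj 5)).image σ := by
      intro x hx
      simp only [Finset.mem_insert, Finset.mem_singleton] at hx
      rcases hx with rfl | rfl | rfl | rfl | rfl <;>
        exact apply_mem_image_filter_adj (Finset.mem_univ _)
          (counterexampleConfig_adj.2 (by decide))
    rw [hσ_eq 0 (by decide), hσ_eq 1 (by decide), hσ_eq 2 (by decide), hσ_eq 3 (by decide),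
      hσ_eq 4 (by decide)] at hnbrs
    exact hσ.not_subset_image_filter_adj (Finset.mem_univ 5)
      ((Finset.insert_subset_insert ca hcover).trans (by simpa [ψ, hφ0] using hnbrs))

end Counterexample

/-- The no-common-neighbour hypothesis of the Holepunch Theorem cannot be dropped: for the
configuration above (with seven pairwise distinct colors `a b c d f r s`), there is no
partial `L`-coloring `φ` of `V(C) ∖ {q0, q1}` with `p0, p1, z ∈ dom φ` leaving lists of
size at least three on `q0` and `q1` such that every extension of `φ` to an `L`-coloring
of `dom φ ∪ {q0, q1}` extends to an `L`-coloring of `G`. -/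
theorem holepunch_counterexample (ca cb cc cd cf cr cs : ℕ)
    (hdist : ([ca, cb, cc, cd, cf, cr, cs] : List ℕ).Nodup) :
    ¬ (counterexampleConfig ca cb cc cd cf cr cs).HasGood := by
  rintro ⟨D, φ, hD, h0, h4, h2, hφ, hq0, hq1, hext⟩
  by_cases h5 : 5 ∈ D
  · rcases counterexampleConfig_card_reducedList_lt_three hdist hφ h0 h2 h4 h5 with h | h <;> omega
  · obtain rfl := counterexampleConfig_domain_eq hD h0 h2 h4 h5
    obtain ⟨ψ, hψφ, hψ, hblock⟩ := counterexampleConfig_exists_unextendable hdist hφ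
    obtain ⟨σ, hσψ, hσ⟩ := hext ψ hψφ hψ
    exact hblock σ hσψ hσ
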